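/- Let q be a query pattern containing events with the Or operator, and let qp_1, ..., qp_m be the simple patterns obtained by expanding every Or into its alternatives (so every occurrence of q in a trace is an occurrence of some qp_j). For each j let E_{x_j} be the set of consecutive et-pairs of qp_j after removing negated and Kleene* events. Define E_t = E_{x_1} ∩ ... ∩ E_{x_m}. Then for any trace t: if t contains an occurrence of q, then t contains all et-pairs in E_t. Equivalently, pruning traces that miss some et-pair of E_t introduces no false negatives. -/
import Mathlib


structure Event where
  type : ℕ
  ts : ℤ
deriving DecidableEq

lemma zip_tail_sublist {a b : ℕ} : ∀ {l : List ℕ}, (a, b) ∈ l.zip l.tail → [a, b].Sublist l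
  | [], h => by simp at h
  | [x], h => by simp at h
  | x :: y :: xs, h => by
      simp only [List.tail_cons, List.zip_cons_cons, List.mem_cons, Prod.mk.injEq] at h
      rcases h with ⟨ha, hb⟩ | h
      · subst ha; subst hb
        exact (List.cons_sublist_cons.mpr (List.singleton_sublist.mpr (by simp)))
      · exact (zip_tail_sublist h).cons x

/-- Let `qps j` (`j : Fin m`) be the simple patterns obtained by expanding
the Or operators of a query `q` (each `qps j` listing the required event types, after
removing negated and Kleene* events).  `E_{x_j}` is the set of consecutive et-pairs of
`qps j`, and `E_t = ⋂_j E_{x_j}`.  If a trace `t` contains an occurrence of `q` (i.e. of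
some alternative `qps j`, as a subsequence of its type sequence), then `t` contains every
et-pair of `E_t`; hence pruning on `E_t` causes no false negatives. -/
theorem stmt7 (m : ℕ) (qps : Fin m → List ℕ)
    (t : List Event) (ht : t.Chain' (fun e1 e2 => e1.ts < e2.ts))
    (hocc : ∃ j : Fin m, (qps j).Sublist (t.map Event.type)) :
    ∀ a b : ℕ, (∀ j : Fin m, (a, b) ∈ (qps j).zip (qps j).tail) →
      ∃ evx ∈ t, ∃ evy ∈ t, evx.type = a ∧ evy.type = b ∧ evx.ts < evy.ts := by
  intro a b hab
  obtain ⟨j, hj⟩ := hocc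
  have hs : [a, b].Sublist (t.map Event.type) := (zip_tail_sublist (hab j)).trans hj
  rw [List.sublist_map_iff] at hs
  obtain ⟨l, hl, hmap⟩ := hs
  match l, hmap with
  | [ea, eb], hmap =>
    simp only [List.map_cons, List.map_nil, List.cons.injEq] at hmap
    have hp : t.Pairwise (fun e1 e2 => e1.ts < e2.ts) :=
      by
      haveI : IsTrans Event (fun e1 e2 => e1.ts < e2.ts) := ⟨fun _ _ _ h1 h2 => h1.trans h2⟩
      exact List.isChain_iff_pairwise.mp ht
    have hp2 := hp.sublist hl
    have hlt : ea.ts < eb.ts := by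
      simpa using List.pairwise_cons.mp hp2 |>.1 eb (by simp)
    exact ⟨ea, hl.subset (by simp), eb, hl.subset (by simp), hmap.1.symm, hmap.2.1.symm, hlt⟩
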